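/- Let 𝔐 be a class of preference models and ★ an 𝔐-DP3-compliant dynamic operator closed over 𝔐, and set 𝔇 = ⟨𝔐, ★⟩. Then for every propositional formula φ ∈ L_0 and every formula ξ ∈ L_≤(★): 𝔇 ⊨ B(φ | [★φ]ξ) → [★φ]B(φ | ξ). -/

import Mathlib

inductive PForm (P : Type) : Type
  | atom : P → PForm P
  | neg  : PForm P → PForm P
  | and  : PForm P → PForm P → PForm P

inductive DForm (P : Type) : Type
  | atom  : P → DForm P
  | neg   : DForm P → DForm P
  | and   : DForm P → DForm P → DForm P
  | all   : DForm P → DForm P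
  | boxLe : DForm P → DForm P
  | boxLt : DForm P → DForm P
  | dyn   : PForm P → DForm P → DForm P

structure PrefModel (P : Type) where
  W : Type
  le : W → W → Prop
  refl : ∀ w, le w w
  trans : ∀ w₁ w₂ w₃, le w₁ w₂ → le w₂ w₃ → le w₁ w₃
  wf : WellFounded (fun w w' => le w w' ∧ ¬ le w' w)
  val : P → Set W

namespace PrefModel
variable {P : Type}
def lt (M : PrefModel P) (w w' : M.W) : Prop := M.le w w' ∧ ¬ M.le w' w
def Min (M : PrefModel P) (S : Set M.W) : Set M.W :=
  {w | w ∈ S ∧ ¬ ∃ w' ∈ S, M.le w' w ∧ ¬ M.le w w'}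
end PrefModel

def psat {P : Type} (M : PrefModel P) : PForm P → M.W → Prop
  | .atom p, w => w ∈ M.val p
  | .neg φ, w => ¬ psat M φ w
  | .and φ ψ, w => psat M φ w ∧ psat M ψ w

def pext {P : Type} (M : PrefModel P) (φ : PForm P) : Set M.W := {w | psat M φ w}

structure DynOp (P : Type) where
  rel : (M : PrefModel P) → PForm P → M.W → M.W → Prop
  refl : ∀ M φ w, rel M φ w w
  trans : ∀ M φ w₁ w₂ w₃, rel M φ w₁ w₂ → rel M φ w₂ w₃ → rel M φ w₁ w₃
  wf : ∀ M φ, WellFounded (fun w w' => rel M φ w w' ∧ ¬ rel M φ w' w)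

def DynOp.apply {P : Type} (s : DynOp P) (M : PrefModel P) (φ : PForm P) : PrefModel P where
  W := M.W
  le := s.rel M φ
  refl := s.refl M φ
  trans := s.trans M φ
  wf := s.wf M φ
  val := M.val

def DynOp.srel {P : Type} (s : DynOp P) (M : PrefModel P) (φ : PForm P) (w w' : M.W) : Prop :=
  s.rel M φ w w' ∧ ¬ s.rel M φ w' w

def PForm.toD {P : Type} : PForm P → DForm P
  | .atom p => .atom p
  | .neg φ => .neg φ.toD
  | .and φ ψ => .and φ.toD ψ.toD

namespace DForm
variable {P : Type}
def imp (ξ ψ : DForm P) : DForm P := .neg (.and ξ (.neg ψ))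
def iff (ξ ψ : DForm P) : DForm P := .and (imp ξ ψ) (imp ψ ξ)
def or (ξ ψ : DForm P) : DForm P := .neg (.and (.neg ξ) (.neg ψ))
def exi (ξ : DForm P) : DForm P := .neg (.all (.neg ξ))
def diaLt (ξ : DForm P) : DForm P := .neg (.boxLt (.neg ξ))
def mu (ξ : DForm P) : DForm P := .and ξ (.neg (diaLt ξ))
def bel (ψ χ : DForm P) : DForm P := .all (imp (mu χ) ψ)
end DForm

def dsat {P : Type} (s : DynOp P) : DForm P → (M : PrefModel P) → M.W → Prop
  | .atom p, M, w => w ∈ M.val p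
  | .neg ξ, M, w => ¬ dsat s ξ M w
  | .and ξ₁ ξ₂, M, w => dsat s ξ₁ M w ∧ dsat s ξ₂ M w
  | .all ξ, M, _ => ∀ w', dsat s ξ M w'
  | .boxLe ξ, M, w => ∀ w', M.le w' w → dsat s ξ M w'
  | .boxLt ξ, M, w => ∀ w', M.lt w' w → dsat s ξ M w'
  | .dyn φ ξ, M, w => dsat s ξ (s.apply M φ) w

def ClosedOver {P : Type} (s : DynOp P) (𝔐 : Set (PrefModel P)) : Prop :=
  ∀ M ∈ 𝔐, ∀ φ : PForm P, s.apply M φ ∈ 𝔐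

/-- `★` is `𝔐`-DP3-compliant. -/
def DP3Compliant {P : Type} (s : DynOp P) (𝔐 : Set (PrefModel P)) : Prop :=
  ∀ M ∈ 𝔐, ∀ (φ : PForm P) (w w' : M.W),
    psat M φ w → ¬ psat M φ w' → M.lt w w' →
      ∀ ξ : DForm P, dsat s (.dyn φ ξ) M w →
        ∃ w'' : M.W, psat M φ w'' ∧ dsat s (.dyn φ ξ) M w'' ∧ s.srel M φ w'' w'

/-! A world `w` that is minimal for `ξ` after the upgrade but violates `φ` leads to a contradiction.
Take `u` minimal among the worlds `≤ w` satisfying `[★φ]ξ` before the upgrade; `u` is then minimal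
for `[★φ]ξ` outright, so the prior belief puts `u` in `φ`. If `w ≤ u`, then `w` is itself minimal
for `[★φ]ξ`, hence in `φ`; otherwise `u < w` with `u ∈ φ` and `w ∉ φ`, and DP3a yields a `φ`-world
satisfying `[★φ]ξ` strictly below `w` in the upgraded order, contradicting the minimality of `w`. -/

namespace PrefModel

variable {P : Type} (M : PrefModel P)

theorem lt_of_lt_of_le {u v w : M.W} (huv : M.lt u v) (hvw : M.le v w) : M.lt u w :=
  ⟨M.trans u v w huv.1 hvw, fun hwu => huv.2 (M.trans v w u hvw hwu)⟩

theorem exists_le_minimal {S : Set M.W} {w : M.W} (hw : w ∈ S) :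
    ∃ u ∈ S, M.le u w ∧ ∀ v ∈ S, ¬ M.lt v u := by
  obtain ⟨u, ⟨huS, huw⟩, hmin⟩ := M.wf.has_min {u | u ∈ S ∧ M.le u w} ⟨w, hw, M.refl w⟩
  exact ⟨u, huS, huw, fun v hvS hvu => hmin v ⟨hvS, M.trans v u w hvu.1 huw⟩ hvu⟩

end PrefModel

section Semantics

variable {P : Type} (s : DynOp P) (M : PrefModel P)

theorem psat_apply (φ ψ : PForm P) (w : M.W) : psat (s.apply M φ) ψ w ↔ psat M ψ w := by
  induction ψ with
  | atom p => exact Iff.rfl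
  | neg χ ih => simp only [psat, ih]
  | and χ₁ χ₂ ih₁ ih₂ => simp only [psat, ih₁, ih₂]

theorem dsat_toD (ψ : PForm P) (w : M.W) : dsat s ψ.toD M w ↔ psat M ψ w := by
  induction ψ with
  | atom p => exact Iff.rfl
  | neg χ ih => simp only [PForm.toD, dsat, psat, ih]
  | and χ₁ χ₂ ih₁ ih₂ => simp only [PForm.toD, dsat, psat, ih₁, ih₂]

theorem dsat_imp (ξ ψ : DForm P) (w : M.W) :
    dsat s (ξ.imp ψ) M w ↔ (dsat s ξ M w → dsat s ψ M w) := by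
  simp only [DForm.imp, dsat, not_and, not_not]

theorem dsat_mu (ξ : DForm P) (w : M.W) :
    dsat s (DForm.mu ξ) M w ↔ dsat s ξ M w ∧ ∀ v, M.lt v w → ¬ dsat s ξ M v := by
  simp only [DForm.mu, DForm.diaLt, dsat, not_not]

theorem dsat_bel (ψ χ : DForm P) (w : M.W) :
    dsat s (DForm.bel ψ χ) M w ↔ ∀ v, dsat s (DForm.mu χ) M v → dsat s ψ M v := by
  simp only [DForm.bel, dsat, dsat_imp]

theorem psat_of_mu_dyn_of_dp3 {𝔐 : Set (PrefModel P)} (hdp3 : DP3Compliant s 𝔐) (hM : M ∈ 𝔐)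
    {φ : PForm P} {ξ : DForm P} (hbel : ∀ v, dsat s (DForm.mu (.dyn φ ξ)) M v → psat M φ v)
    {w : M.W} (hmu : dsat s (DForm.mu ξ) (s.apply M φ) w) : psat M φ w := by
  obtain ⟨hw, hw_min⟩ := (dsat_mu s (s.apply M φ) ξ w).1 hmu
  by_contra hnφ
  obtain ⟨u, hu, huw, hu_min⟩ :=
    M.exists_le_minimal (S := {v | dsat s (.dyn φ ξ) M v}) (w := w) hw
  have hu_mu : dsat s (DForm.mu (.dyn φ ξ)) M u :=
    (dsat_mu s M _ u).2 ⟨hu, fun v hvu hv => hu_min v hv hvu⟩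
  by_cases hwu : M.le w u
  · have hw_mu : dsat s (DForm.mu (.dyn φ ξ)) M w :=
      (dsat_mu s M _ w).2 ⟨hw, fun v hvw hv => hu_min v hv (M.lt_of_lt_of_le hvw hwu)⟩
    exact hnφ (hbel w hw_mu)
  · obtain ⟨v, -, hv, hvw⟩ := hdp3 M hM φ u w (hbel u hu_mu) hnφ ⟨huw, hwu⟩ ξ hu
    exact hw_min v hvw hv

end Semantics

theorem dp3_compliance_syntactic_general {P : Type}
    (𝔐 : Set (PrefModel P)) (s : DynOp P)
    (hdp3 : DP3Compliant s 𝔐) (φ : PForm P) (ξ : DForm P) :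
    ∀ M ∈ 𝔐, ∀ w : M.W,
      dsat s ((DForm.bel φ.toD (DForm.dyn φ ξ)).imp
        (DForm.dyn φ (DForm.bel φ.toD ξ))) M w := by
  intro M hM w
  rw [dsat_imp, dsat_bel]
  intro hbel
  refine (dsat_bel s (s.apply M φ) _ _ w).2 fun v hv => (dsat_toD s _ φ v).2 ?_
  exact (psat_apply s M φ φ v).2 <|
    psat_of_mu_dyn_of_dp3 s M hdp3 hM (fun u hu => (dsat_toD s M φ u).1 (hbel u hu)) hv

theorem dp3_compliance_syntactic {P : Type}
    (𝔐 : Set (PrefModel P)) (s : DynOp P) (hclosed : ClosedOver s 𝔐)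
    (hdp3 : DP3Compliant s 𝔐) (φ : PForm P) (ξ : DForm P) :
    ∀ M ∈ 𝔐, ∀ w : M.W,
      dsat s ((DForm.bel φ.toD (DForm.dyn φ ξ)).imp
        (DForm.dyn φ (DForm.bel φ.toD ξ))) M w :=
  dp3_compliance_syntactic_general 𝔐 s hdp3 φ ξ
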